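/- For integers n ≥ 0 and m ≥ 1, n! ∑_{k=m}^∞ (1/(k(k+1)···(k+n))) · s(k,m)/k! = ζ(m+1) - H_n^(m+1), where s(k,m) denotes the unsigned Stirling number of the first kind and H_0^(m+1) = 0. In particular for n = 0, ζ(m+1) = ∑_{k=m}^∞ s(k,m)/(k!·k). -/

import Mathlib

open scoped BigOperators
open Finset

/-- Polylogarithm Li_p(x) = ∑_{k≥1} x^k / k^p. -/
noncomputable def Li (p : ℕ) (x : ℝ) : ℝ := ∑' k : ℕ, x ^ (k + 1) / ((k : ℝ) + 1) ^ p

/-- Riemann zeta at a natural argument, as a series. -/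
noncomputable def zetaS (s : ℕ) : ℝ := ∑' n : ℕ, 1 / ((n : ℝ) + 1) ^ s

/-- Generalized harmonic number H_n^{(p)}. -/
noncomputable def H (n p : ℕ) : ℝ := ∑ j ∈ Finset.Icc 1 n, 1 / (j : ℝ) ^ p

/-- Digamma function: logarithmic derivative of Gamma. -/
noncomputable def digamma (x : ℝ) : ℝ := deriv (fun y : ℝ => Real.log (Real.Gamma y)) x

/-- Unsigned Stirling numbers of the first kind. -/
def stirling1 : ℕ → ℕ → ℕ
  | 0, 0 => 1
  | 0, _ + 1 => 0
  | _ + 1, 0 => 0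
  | k + 1, m + 1 => k * stirling1 k (m + 1) + stirling1 k m


lemma stirling1_zero_succ (m : ℕ) : stirling1 0 (m+1) = 0 := rfl
lemma stirling1_succ_zero (k : ℕ) : stirling1 (k+1) 0 = 0 := rfl
lemma stirling1_rec (k m : ℕ) : stirling1 (k+1) (m+1) = k * stirling1 k (m + 1) + stirling1 k m := rfl

lemma stirling1_eq_zero_of_lt : ∀ {k m : ℕ}, k < m → stirling1 k m = 0 := by
  intro k
  induction k with
  | zero => intro m h; obtain ⟨m', rfl⟩ := Nat.exists_eq_add_of_lt h; rfl
  | succ k ih =>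
    intro m h
    obtain ⟨m', rfl⟩ : ∃ m', m = m' + 1 := ⟨m - 1, by omega⟩
    rw [stirling1_rec, ih (by omega), ih (by omega)]
    simp

noncomputable def rr (y : ℝ) (k : ℕ) : ℝ := (∏ i ∈ Finset.range k, (y + 1 + i))⁻¹

lemma rr_zero (y : ℝ) : rr y 0 = 1 := by simp [rr]

lemma prod_pos' {y : ℝ} (hy : 0 < y) (k : ℕ) : 0 < ∏ i ∈ Finset.range k, (y + 1 + (i:ℝ)) := by
  apply Finset.prod_pos; intro i _; positivity

lemma rr_pos {y : ℝ} (hy : 0 < y) (k : ℕ) : 0 < rr y k := by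
  simpa [rr] using inv_pos.mpr (prod_pos' hy k)

lemma rr_succ {y : ℝ} (hy : 0 < y) (k : ℕ) : rr y k = (y + 1 + k) * rr y (k+1) := by
  have h := prod_pos' hy (k+1)
  have h2 := prod_pos' hy k
  rw [rr, rr, Finset.prod_range_succ]
  field_simp

lemma rr_key {y : ℝ} (hy : 0 < y) (k : ℕ) :
    y * rr y (k+1) = rr y k - (k+1) * rr y (k+1) := by
  rw [rr_succ hy k]; ring

theorem main_lemma (y : ℝ) (hy : 0 < y) (m : ℕ) :
    Summable (fun k => (stirling1 k m : ℝ) * rr y k) ∧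
    ∑' k, (stirling1 k m : ℝ) * rr y k = (1/y)^m := by
  induction m with
  | zero =>
    constructor
    · apply summable_of_finite_support
      apply Set.Finite.subset (Set.finite_singleton 0)
      intro k hk
      rcases k with _ | k
      · simp
      · exfalso; apply hk; simp [stirling1_succ_zero]
    · rw [tsum_eq_single 0]
      · simp [rr_zero]; rfl
      · intro k hk
        rcases k with _ | k
        · simp at hk
        · simp [stirling1_succ_zero]
  | succ m ih =>
    obtain ⟨hs, hsum⟩ := ih
    set f : ℕ → ℝ := fun k => (stirling1 k (m+1) : ℝ) * rr y k with hf
    set g : ℕ → ℝ := fun k => (stirling1 k m : ℝ) * rr y k with hg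
    have hf0 : ∀ k, 0 ≤ f k := fun k => mul_nonneg (Nat.cast_nonneg _) (rr_pos hy k).le
    have hg0 : ∀ k, 0 ≤ g k := fun k => mul_nonneg (Nat.cast_nonneg _) (rr_pos hy k).le
    set b : ℕ → ℝ := fun K => (K : ℝ) * (stirling1 K (m+1) : ℝ) * rr y K with hb
    have hb0 : ∀ K, 0 ≤ b K := fun K =>
      mul_nonneg (mul_nonneg (Nat.cast_nonneg _) (Nat.cast_nonneg _)) (rr_pos hy K).le
    -- key finite identity
    have key : ∀ K : ℕ, y * ∑ k ∈ Finset.range (K+1), f k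
        = (∑ k ∈ Finset.range K, g k) - b K := by
      intro K
      induction K with
      | zero => simp [f, b, show stirling1 0 (m+1) = 0 from rfl]
      | succ K ihK =>
        rw [Finset.sum_range_succ, mul_add, ihK, Finset.sum_range_succ]
        have h1 : f (K+1) = (stirling1 (K+1) (m+1) : ℝ) * rr y (K+1) := rfl
        have h2 : (stirling1 (K+1) (m+1) : ℝ) = K * stirling1 K (m+1) + stirling1 K m := by
          rw [stirling1_rec]; push_cast; ring
        have h3 := rr_key hy K
        simp only [h1, h2, hb, hg]
        push_cast
        nlinarith [h3]
    have L := (1/y:ℝ)^m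
    have hLm : ∀ K, ∑ k ∈ Finset.range K, g k ≤ (1/y)^m := by
      intro K
      rw [← hsum]
      exact Summable.sum_le_tsum _ (fun i _ => hg0 i) hs
    have hyinv : (0:ℝ) < 1/y := by positivity
    have hbnd : ∀ K, ∑ k ∈ Finset.range K, f k ≤ (1/y)^m / y := by
      intro K
      rcases K with _ | K
      · simp; positivity
      · have := key K
        have h2 : y * ∑ k ∈ Finset.range (K+1), f k ≤ (1/y)^m := by
          rw [this]
          have := hb0 K
          have := hLm K
          linarith
        exact (le_div_iff₀' hy).mpr h2
    have hfs : Summable f := summable_of_sum_range_le hf0 hbnd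
    set L' := ∑' k, f k with hL'
    -- b K tends to (1/y)^m - y * L'
    have htend : Filter.Tendsto b Filter.atTop (nhds ((1/y)^m - y * L')) := by
      have hgt : Filter.Tendsto (fun K => ∑ k ∈ Finset.range K, g k) Filter.atTop (nhds ((1/y)^m)) := by
        rw [← hsum]; exact hs.hasSum.tendsto_sum_nat
      have hft : Filter.Tendsto (fun K => y * ∑ k ∈ Finset.range (K+1), f k) Filter.atTop (nhds (y * L')) := by
        apply Filter.Tendsto.const_mul
        exact (hfs.hasSum.tendsto_sum_nat).comp (Filter.tendsto_add_atTop_nat 1)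
      have : Filter.Tendsto (fun K => (∑ k ∈ Finset.range K, g k) - y * ∑ k ∈ Finset.range (K+1), f k)
          Filter.atTop (nhds ((1/y)^m - y * L')) := hgt.sub hft
      apply this.congr
      intro K
      rw [key K]; ring
    set c := (1/y)^m - y * L' with hc
    have hc0 : 0 ≤ c := ge_of_tendsto htend (Filter.Eventually.of_forall hb0)
    have hcle : c ≤ 0 := by
      by_contra hpos
      push_neg at hpos
      have hev : ∀ᶠ K in Filter.atTop, c/2 < b K := by
        exact htend.eventually (eventually_gt_nhds (half_lt_self hpos))
      obtain ⟨N, hN⟩ := hev.exists_forall_of_atTop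
      have hcomp : ∀ K : ℕ, c/2 * (1/((K:ℝ) + (N+1))) ≤ f (K + (N+1)) := by
        intro K
        have h1 : c/2 < b (K + (N+1)) := hN _ (by omega)
        have h2 : b (K + (N+1)) = ((K:ℝ) + (N+1)) * f (K + (N+1)) := by
          simp only [hb, hf]
          push_cast
          ring
        have hpos2 : (0:ℝ) < (K:ℝ) + (N+1) := by positivity
        rw [h2] at h1
        rw [mul_one_div, div_le_iff₀ hpos2]
        nlinarith [h1]
      have hsum1 : Summable (fun K : ℕ => f (K + (N+1))) := (summable_nat_add_iff (N+1)).mpr hfs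
      have hsum2 : Summable (fun K : ℕ => c/2 * (1/((K:ℝ) + (N+1)))) := by
        apply Summable.of_nonneg_of_le _ hcomp hsum1
        intro K
        positivity
      have hsum3 : Summable (fun K : ℕ => 1/((K:ℝ) + (N+1))) := by
        have := hsum2.mul_left (2/c)
        apply this.congr
        intro K
        field_simp
      have hsum4 : Summable (fun K : ℕ => 1/(K:ℝ)) := by
        rw [← summable_nat_add_iff (N+1)]
        apply hsum3.congr
        intro K
        push_cast
        ring_nf
      exact Real.not_summable_one_div_natCast hsum4
    have hceq : c = 0 := le_antisymm hcle hc0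
    refine ⟨hfs, ?_⟩
    have : y * L' = (1/y)^m := by
      have : (1/y)^m - y * L' = 0 := hceq
      linarith
    field_simp at this ⊢
    rw [pow_succ]
    rw [← this]
    field_simp


lemma fact_ineq1 (n t : ℕ) :
    n.factorial * t.factorial * (t+2).factorial ≤ 2 * ((t+n+1).factorial * (t+1).factorial) := by
  induction n with
  | zero =>
    have h1 : (t+2).factorial = (t+2) * (t+1).factorial := Nat.factorial_succ (t+1)
    have h2 : (t+1).factorial = (t+1) * t.factorial := Nat.factorial_succ t
    simp only [Nat.factorial_zero, one_mul, Nat.add_zero]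
    calc t.factorial * (t+2).factorial = (t+2) * (t.factorial * (t+1).factorial) := by
          rw [h1]; ring
      _ ≤ (2*(t+1)) * (t.factorial * (t+1).factorial) := by
          apply Nat.mul_le_mul_right; omega
      _ = 2 * ((t+1) * t.factorial * (t+1).factorial) := by ring
      _ = 2 * ((t+1).factorial * (t+1).factorial) := by rw [← h2]
  | succ n ih =>
    have h1 : (n+1).factorial = (n+1) * n.factorial := Nat.factorial_succ n
    have h2 : (t+(n+1)+1).factorial = (t+n+2) * (t+n+1).factorial := by
      have : t+(n+1)+1 = (t+n+1)+1 := by omega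
      rw [this, Nat.factorial_succ]
    calc (n+1).factorial * t.factorial * (t+2).factorial
        = (n+1) * (n.factorial * t.factorial * (t+2).factorial) := by rw [h1]; ring
      _ ≤ (n+1) * (2 * ((t+n+1).factorial * (t+1).factorial)) := Nat.mul_le_mul_left _ ih
      _ ≤ (t+n+2) * (2 * ((t+n+1).factorial * (t+1).factorial)) := by
          apply Nat.mul_le_mul_right; omega
      _ = 2 * (((t+n+2) * (t+n+1).factorial) * (t+1).factorial) := by ring
      _ = 2 * ((t+(n+1)+1).factorial * (t+1).factorial) := by rw [← h2]

lemma fact_ineq2 (n t : ℕ) : (n+1).factorial * (t+1).factorial ≤ (t+n+1).factorial := by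
  induction n with
  | zero => simp [show t+0+1 = t+1 by omega]
  | succ n ih =>
    have h1 : (n+2).factorial = (n+2) * (n+1).factorial := Nat.factorial_succ (n+1)
    have h2 : (t+(n+1)+1).factorial = (t+n+2) * (t+n+1).factorial := by
      have : t+(n+1)+1 = (t+n+1)+1 := by omega
      rw [this, Nat.factorial_succ]
    calc (n+1+1).factorial * (t+1).factorial = (n+2) * ((n+1).factorial * (t+1).factorial) := by
          rw [h1]; ring
      _ ≤ (n+2) * (t+n+1).factorial := Nat.mul_le_mul_left _ ih
      _ ≤ (t+n+2) * (t+n+1).factorial := by apply Nat.mul_le_mul_right; omega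
      _ = (t+(n+1)+1).factorial := h2.symm

lemma prodfac (a j : ℕ) :
    ∏ i ∈ Finset.range j, ((a:ℝ) + 1 + i) = ((a+j).factorial : ℝ) / (a.factorial : ℝ) := by
  induction j with
  | zero => simp [div_self (show (a.factorial:ℝ) ≠ 0 from Nat.cast_ne_zero.mpr (Nat.factorial_ne_zero a))]
  | succ j ih =>
    rw [Finset.prod_range_succ, ih]
    have h1 : (a+(j+1)).factorial = (a+j+1) * (a+j).factorial := by
      rw [show a+(j+1) = (a+j)+1 by omega, Nat.factorial_succ]
    rw [h1]
    have h2 : (a.factorial : ℝ) ≠ 0 := Nat.cast_ne_zero.mpr (Nat.factorial_ne_zero a)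
    field_simp
    push_cast
    ring

noncomputable def U (m n t : ℕ) : ℝ :=
  (n.factorial : ℝ) * (t.factorial : ℝ) * (stirling1 (t+1) m : ℝ)
    / (((t+n+1).factorial : ℝ) * ((t+1).factorial : ℝ))

lemma fact_cast_pos (a : ℕ) : (0:ℝ) < (a.factorial : ℝ) :=
  Nat.cast_pos.mpr a.factorial_pos

lemma U_nonneg (m n t : ℕ) : 0 ≤ U m n t := by
  unfold U
  have h1 := fact_cast_pos (t+n+1)
  have h2 := fact_cast_pos (t+1)
  positivity

lemma rr_nat (n j : ℕ) : rr ((n:ℝ)+1) j = ((n+1).factorial : ℝ) / ((n+1+j).factorial : ℝ) := by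
  unfold rr
  have h : ∀ i ∈ Finset.range j, ((n:ℝ)+1) + 1 + (i:ℕ) = ((n+1:ℕ):ℝ) + 1 + i := by
    intro i _; push_cast; ring
  rw [Finset.prod_congr rfl h, prodfac (n+1) j, inv_div]

lemma w_eval (m n t : ℕ) :
    (stirling1 (t+1) m : ℝ) * rr ((n:ℝ)+1) (t+1)
      = (stirling1 (t+1) m : ℝ) * ((n+1).factorial : ℝ) / (((t+n+2).factorial : ℝ)) := by
  rw [rr_nat, show n+1+(t+1) = t+n+2 by omega]
  ring

lemma sum_w (m n : ℕ) (hm : 1 ≤ m) :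
    Summable (fun t => (stirling1 (t+1) m : ℝ) * rr ((n:ℝ)+1) (t+1)) ∧
    ∑' t, (stirling1 (t+1) m : ℝ) * rr ((n:ℝ)+1) (t+1) = (1/((n:ℝ)+1))^m := by
  have hy : (0:ℝ) < (n:ℝ)+1 := by positivity
  obtain ⟨hs, hsum⟩ := main_lemma ((n:ℝ)+1) hy m
  have hshift : Summable (fun t => (stirling1 (t+1) m : ℝ) * rr ((n:ℝ)+1) (t+1)) :=
    (summable_nat_add_iff 1).mpr hs
  refine ⟨hshift, ?_⟩
  have h0 := Summable.sum_add_tsum_nat_add 1 hs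
  have hz : stirling1 0 m = 0 := stirling1_eq_zero_of_lt hm
  simp only [Finset.range_one, Finset.sum_singleton, hz, Nat.cast_zero, zero_mul, zero_add] at h0
  rw [h0, hsum]

lemma U_le (m n t : ℕ) :
    U m n t ≤ 2 * ((stirling1 (t+1) m : ℝ) * rr (((0:ℕ):ℝ)+1) (t+1)) := by
  rw [w_eval m 0 t]
  unfold U
  have h1 := fact_cast_pos (t+n+1)
  have h2 := fact_cast_pos (t+1)
  have h3 := fact_cast_pos (t+0+2)
  have h01 : ((0+1:ℕ).factorial : ℝ) = 1 := by norm_num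
  rw [h01, mul_one]
  rw [show (2:ℝ)*((stirling1 (t+1) m:ℝ)/((t+0+2).factorial:ℝ))
      = (2*(stirling1 (t+1) m:ℝ))/((t+0+2).factorial:ℝ) by ring]
  rw [div_le_div_iff₀ (by positivity) h3]
  have hkey : (n.factorial * t.factorial * (t+2).factorial : ℝ)
      ≤ 2 * ((t+n+1).factorial * (t+1).factorial) := by
    exact_mod_cast fact_ineq1 n t
  have hs0 : (0:ℝ) ≤ (stirling1 (t+1) m : ℝ) := Nat.cast_nonneg _
  rw [show t+0+2 = t+2 from rfl]
  nlinarith [mul_le_mul_of_nonneg_left hkey hs0]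

lemma U_summable (m n : ℕ) (hm : 1 ≤ m) : Summable (U m n) := by
  apply Summable.of_nonneg_of_le (U_nonneg m n) (U_le m n)
  exact ((sum_w m 0 hm).1.mul_left 2)

lemma U_telescope (m n t : ℕ) :
    U m n t - U m (n+1) t
      = ((stirling1 (t+1) m : ℝ) * rr ((n:ℝ)+1) (t+1)) * (1/((n:ℝ)+1)) := by
  rw [w_eval m n t]
  unfold U
  have e1 : (t+(n+1)+1) = (t+n+1)+1 := by omega
  have e2 : (t+n+2) = (t+n+1)+1 := by omega
  rw [e1, e2, Nat.factorial_succ (t+n+1), Nat.factorial_succ n, Nat.factorial_succ t]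
  have h1 : ((t+n+1).factorial : ℝ) ≠ 0 := (fact_cast_pos _).ne'
  have h2 : ((t+1).factorial : ℝ) ≠ 0 := (fact_cast_pos _).ne'
  have h3 : (t.factorial : ℝ) ≠ 0 := (fact_cast_pos _).ne'
  have h4 : (n.factorial : ℝ) ≠ 0 := (fact_cast_pos _).ne'
  have h5 : ((n:ℝ)+1) ≠ 0 := by positivity
  have h6 : ((t:ℝ)+1) ≠ 0 := by positivity
  have h7 : ((t:ℝ)+(n:ℝ)+1+1) ≠ 0 := by positivity
  push_cast
  field_simp
  ring

lemma U_dec (m n t : ℕ) : U m n t * ((n:ℝ)+1) ≤ U m 0 t := by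
  unfold U
  have h1 := fact_cast_pos (t+n+1)
  have h2 := fact_cast_pos (t+1)
  have h3 := fact_cast_pos (t+0+1)
  have h4 := fact_cast_pos t
  have hs0 : (0:ℝ) ≤ (stirling1 (t+1) m : ℝ) := Nat.cast_nonneg _
  rw [div_mul_eq_mul_div, div_le_div_iff₀ (by positivity) (by positivity)]
  have hkey : ((n+1).factorial * (t+1).factorial : ℝ) ≤ ((t+n+1).factorial : ℝ) := by
    exact_mod_cast fact_ineq2 n t
  have hfs : ((n+1).factorial : ℝ) = (n.factorial : ℝ) * ((n:ℝ)+1) := by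
    rw [Nat.factorial_succ]; push_cast; ring
  rw [hfs] at hkey
  rw [show t+0+1 = t+1 from rfl]
  simp only [Nat.factorial_zero, Nat.cast_one]
  nlinarith [mul_le_mul_of_nonneg_left hkey (mul_nonneg hs0 h4.le), h4, h2]

lemma zsummable {p : ℕ} (hp : 2 ≤ p) : Summable (fun i : ℕ => 1 / ((i:ℝ)+1)^p) := by
  have h1 := (Real.summable_one_div_nat_pow (p:=p)).mpr (by omega)
  have h2 := (summable_nat_add_iff 1).mpr h1
  apply h2.congr
  intro i
  push_cast
  ring

lemma H_eq (N p : ℕ) : H N p = ∑ i ∈ Finset.range N, 1/((i:ℝ)+1)^p := by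
  induction N with
  | zero => simp [H]
  | succ N ih =>
    rw [H, Finset.sum_Icc_succ_top (by omega), ← H, ih, Finset.sum_range_succ]
    push_cast
    ring

lemma H_tendsto {p : ℕ} (hp : 2 ≤ p) :
    Filter.Tendsto (fun N => H N p) Filter.atTop (nhds (zetaS p)) := by
  have h1 := (zsummable hp).hasSum.tendsto_sum_nat
  rw [show (∑' i : ℕ, 1/((i:ℝ)+1)^p) = zetaS p from rfl] at h1
  apply h1.congr
  intro N
  rw [H_eq]

noncomputable def G (m n : ℕ) : ℝ := ∑' t, U m n t

lemma G_nonneg (m n : ℕ) : 0 ≤ G m n := tsum_nonneg (U_nonneg m n)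

lemma G_tel (m n : ℕ) (hm : 1 ≤ m) : G m n = G m (n+1) + (1/((n:ℝ)+1))^(m+1) := by
  have h1 := U_summable m n hm
  have h2 := U_summable m (n+1) hm
  have h3 : G m n - G m (n+1) = ∑' t, (U m n t - U m (n+1) t) := (Summable.tsum_sub h1 h2).symm
  have h4 : ∑' t, (U m n t - U m (n+1) t)
      = ∑' t, ((stirling1 (t+1) m : ℝ) * rr ((n:ℝ)+1) (t+1)) * (1/((n:ℝ)+1)) := by
    exact tsum_congr (fun t => U_telescope m n t)
  rw [h4, tsum_mul_right, (sum_w m n hm).2] at h3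
  have : (1/((n:ℝ)+1))^m * (1/((n:ℝ)+1)) = (1/((n:ℝ)+1))^(m+1) := (pow_succ _ _).symm
  linarith [h3, this.symm ▸ h3]

lemma G_partial (m : ℕ) (hm : 1 ≤ m) (n : ℕ) :
    G m 0 = G m n + ∑ i ∈ Finset.range n, (1/((i:ℝ)+1))^(m+1) := by
  induction n with
  | zero => simp
  | succ n ih =>
    rw [ih, Finset.sum_range_succ, G_tel m n hm]
    ring

lemma G_le (m n : ℕ) (hm : 1 ≤ m) : G m n * ((n:ℝ)+1) ≤ G m 0 := by
  have h1 : G m n * ((n:ℝ)+1) = ∑' t, U m n t * ((n:ℝ)+1) := tsum_mul_right.symm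
  rw [h1]
  exact Summable.tsum_le_tsum (fun t => U_dec m n t) ((U_summable m n hm).mul_right _) (U_summable m 0 hm)

lemma G_tendsto (m : ℕ) (hm : 1 ≤ m) :
    Filter.Tendsto (G m) Filter.atTop (nhds 0) := by
  refine squeeze_zero (g := fun n : ℕ => G m 0 * (1/((n:ℝ)+1))) (G_nonneg m) ?_ ?_
  · intro n
    have hp : (0:ℝ) < (n:ℝ)+1 := by positivity
    have := G_le m n hm
    show G m n ≤ G m 0 * (1 / ((n:ℝ) + 1))
    rw [mul_one_div, le_div_iff₀ hp]
    linarith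
  · have := tendsto_one_div_add_atTop_nhds_zero_nat.const_mul (G m 0)
    simpa using this

lemma G0_eq (m : ℕ) (hm : 1 ≤ m) : G m 0 = zetaS (m+1) := by
  have hp : 2 ≤ m+1 := by omega
  have h1 : Filter.Tendsto (fun n => G m n + ∑ i ∈ Finset.range n, (1/((i:ℝ)+1))^(m+1))
      Filter.atTop (nhds (0 + zetaS (m+1))) := by
    apply Filter.Tendsto.add (G_tendsto m hm)
    have h := (zsummable hp).hasSum.tendsto_sum_nat
    rw [show (∑' i : ℕ, 1/((i:ℝ)+1)^(m+1)) = zetaS (m+1) from rfl] at h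
    apply h.congr
    intro N
    exact Finset.sum_congr rfl fun i _ => (one_div_pow _ _).symm
  have h2 : (fun n => G m n + ∑ i ∈ Finset.range n, (1/((i:ℝ)+1))^(m+1))
      = fun _ => G m 0 := by
    funext n
    exact (G_partial m hm n).symm
  rw [h2] at h1
  have := tendsto_nhds_unique h1 tendsto_const_nhds
  rw [← this, zero_add]

lemma G_eq (m n : ℕ) (hm : 1 ≤ m) : G m n = zetaS (m+1) - H n (m+1) := by
  rw [H_eq]
  have h := G_partial m hm n
  rw [G0_eq m hm] at h
  simp only [one_div_pow] at h
  linarith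

lemma U_head_zero (m n i : ℕ) (hi : i + 1 < m) : U m n i = 0 := by
  unfold U
  rw [stirling1_eq_zero_of_lt hi]
  simp

lemma tsum_shift_eq (m' m n : ℕ) (hm : m = m'+1) (hmm : 1 ≤ m) :
    ∑' k : ℕ, U m n (k + m') = G m n := by
  have hsum := U_summable m n hmm
  have h0 := Summable.sum_add_tsum_nat_add m' hsum
  have hhead : ∑ i ∈ Finset.range m', U m n i = 0 := by
    apply Finset.sum_eq_zero
    intro i hi
    exact U_head_zero m n i (by simp at hi; omega)
  rw [hhead, zero_add] at h0
  exact h0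

theorem stmt19 (n m : ℕ) (hm : 1 ≤ m) :
    ((Nat.factorial n : ℝ) * ∑' k : ℕ,
        (1 / ∏ i ∈ Finset.range (n + 1), (((k : ℝ) + m) + i))
          * (stirling1 (k + m) m : ℝ) / (Nat.factorial (k + m) : ℝ)
      = zetaS (m + 1) - H n (m + 1))
    ∧ (zetaS (m + 1) = ∑' k : ℕ,
        (stirling1 (k + m) m : ℝ) / ((Nat.factorial (k + m) : ℝ) * ((k : ℝ) + m))) := by
  obtain ⟨m', rfl⟩ : ∃ m', m = m'+1 := ⟨m-1, by omega⟩
  have hprod : ∀ k : ℕ, ∏ i ∈ Finset.range (n+1), (((k:ℝ) + (m'+1:ℕ)) + i)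
      = (((k+m')+(n+1)).factorial : ℝ) / ((k+m').factorial : ℝ) := by
    intro k
    rw [← prodfac (k+m') (n+1)]
    apply Finset.prod_congr rfl
    intro i _
    push_cast
    ring
  have key : ∀ k : ℕ, (Nat.factorial n : ℝ) *
      ((1 / ∏ i ∈ Finset.range (n + 1), (((k : ℝ) + (m'+1:ℕ)) + i))
        * (stirling1 (k + (m'+1)) (m'+1) : ℝ) / (Nat.factorial (k + (m'+1)) : ℝ))
      = U (m'+1) n (k + m') := by
    intro k
    rw [hprod k]
    unfold U
    rw [show (k+m')+(n+1) = (k+m')+n+1 by omega, show k+(m'+1) = (k+m')+1 by omega]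
    have h1 : ((k+m').factorial : ℝ) ≠ 0 := (fact_cast_pos _).ne'
    have h2 : (((k+m')+n+1).factorial : ℝ) ≠ 0 := (fact_cast_pos _).ne'
    have h3 : (((k+m')+1).factorial : ℝ) ≠ 0 := (fact_cast_pos _).ne'
    field_simp
  constructor
  · rw [← tsum_mul_left, tsum_congr key, tsum_shift_eq m' (m'+1) n rfl (by omega)]
    exact G_eq (m'+1) n (by omega)
  · have key2 : ∀ k : ℕ, (stirling1 (k + (m'+1)) (m'+1) : ℝ)
        / ((Nat.factorial (k + (m'+1)) : ℝ) * ((k : ℝ) + (m'+1:ℕ)))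
        = U (m'+1) 0 (k + m') := by
      intro k
      unfold U
      rw [show k+(m'+1) = (k+m')+1 by omega, show (k+m')+0+1 = (k+m')+1 by omega]
      rw [Nat.factorial_succ (k+m')]
      have h1 : ((k+m').factorial : ℝ) ≠ 0 := (fact_cast_pos _).ne'
      have h4 : ((k:ℝ) + ((m'+1:ℕ):ℝ)) = ((k+m':ℕ):ℝ) + 1 := by push_cast; ring
      rw [h4]
      have h5 : ((k+m':ℕ):ℝ) + 1 ≠ 0 := by positivity
      simp only [Nat.factorial_zero, Nat.cast_one, one_mul]
      push_cast
      field_simp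
    rw [tsum_congr key2, tsum_shift_eq m' (m'+1) 0 rfl (by omega), G0_eq (m'+1) (by omega)]
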